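/- Let 𝔤 = 𝔤_{3.3} ⊕ 𝔤₁ be the 4-dimensional real Lie algebra with basis e₁,...,e₄ and nonzero brackets [e₂,e₃] = −e₂ and [e₃,e₁] = e₁. A 4×4 real matrix R equals η·Id + D for some η ∈ ℝ and some derivation D of 𝔤 if and only if R₃₁ = R₄₁ = R₃₂ = R₄₂ = R₁₄ = R₂₄ = R₃₄ = 0. In this case η = R₃₃. -/

import Mathlib

open Matrix

/-- The Lie bracket of the Lie algebra, in coordinates. -/
def br (x y : Fin 4 → ℝ) : Fin 4 → ℝ :=
  ![(x 2 * y 0 - x 0 * y 2), -(x 1 * y 2 - x 2 * y 1), (0:ℝ), (0:ℝ)]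

/-- `D` (acting via `mulVec`) is a derivation of the bracket. -/
def IsDer (D : Matrix (Fin 4) (Fin 4) ℝ) : Prop :=
  ∀ x y : Fin 4 → ℝ, D.mulVec (br x y) = br (D.mulVec x) y + br x (D.mulVec y)

/-
A derivation preserves the derived algebra `⟨e₁, e₂⟩` and the centre `⟨e₄⟩`, and since
`ad e₃` acts on `e₁` with eigenvalue `1`, applying `D` to `[e₃, e₁] = e₁` forces `D₃₃ = 0`;
these eight conditions are also sufficient. Since `η • 1` only shifts the diagonal,
`R - η • 1` is a derivation exactly when the seven off-diagonal entries of `R` vanish and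
`η = R₃₃` (in Lean indices start at `0`, so `R₃₃` is `R 2 2`).
-/

theorem isDer_iff (D : Matrix (Fin 4) (Fin 4) ℝ) :
    IsDer D ↔ D 2 0 = 0 ∧ D 3 0 = 0 ∧ D 2 1 = 0 ∧ D 3 1 = 0 ∧ D 0 3 = 0 ∧ D 1 3 = 0 ∧
      D 2 3 = 0 ∧ D 2 2 = 0 := by
  constructor
  · intro hD
    have on_e₁_e₃ := hD ![1, 0, 0, 0] ![0, 0, 1, 0]
    have on_e₂_e₃ := hD ![0, 1, 0, 0] ![0, 0, 1, 0]
    have on_e₁_e₄ := hD ![1, 0, 0, 0] ![0, 0, 0, 1]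
    have on_e₃_e₄ := hD ![0, 0, 1, 0] ![0, 0, 0, 1]
    simp [br, mulVec, dotProduct, Fin.sum_univ_four, funext_iff, Fin.forall_fin_succ]
      at on_e₁_e₃ on_e₂_e₃ on_e₁_e₄ on_e₃_e₄
    refine ⟨?_, ?_, ?_, ?_, ?_, ?_, ?_, ?_⟩ <;> linarith
  · rintro ⟨h20, h30, h21, h31, h03, h13, h23, h22⟩ x y
    funext i
    fin_cases i <;> simp [br, mulVec, dotProduct, Fin.sum_univ_four, *] <;> ring

theorem isDer_sub_smul_one_iff (R : Matrix (Fin 4) (Fin 4) ℝ) (η : ℝ) :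
    IsDer (R - η • 1) ↔ (R 2 0 = 0 ∧ R 3 0 = 0 ∧ R 2 1 = 0 ∧ R 3 1 = 0 ∧ R 0 3 = 0 ∧
      R 1 3 = 0 ∧ R 2 3 = 0) ∧ R 2 2 = η := by
  simp [isDer_iff, Matrix.sub_apply, one_apply, sub_eq_zero, and_assoc]

theorem stmt_4 (R : Matrix (Fin 4) (Fin 4) ℝ) :
    ((∃ (η : ℝ) (D : Matrix (Fin 4) (Fin 4) ℝ), IsDer D ∧
        R = η • (1 : Matrix (Fin 4) (Fin 4) ℝ) + D) ↔
      (R 2 0 = 0 ∧ R 3 0 = 0 ∧ R 2 1 = 0 ∧ R 3 1 = 0 ∧ R 0 3 = 0 ∧ R 1 3 = 0 ∧ R 2 3 = 0)) ∧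
    (∀ (η : ℝ) (D : Matrix (Fin 4) (Fin 4) ℝ), IsDer D →
      R = η • (1 : Matrix (Fin 4) (Fin 4) ℝ) + D → η = R 2 2) := by
  have decompose : ∀ (η : ℝ) (D : Matrix (Fin 4) (Fin 4) ℝ),
      R = η • 1 + D ↔ D = R - η • 1 := fun η D => by
    rw [eq_sub_iff_add_eq', eq_comm]
  refine ⟨⟨?_, fun h => ⟨R 2 2, R - R 2 2 • 1, (isDer_sub_smul_one_iff R _).2 ⟨h, rfl⟩,
    (decompose _ _).2 rfl⟩⟩, ?_⟩
  · rintro ⟨η, D, hD, hR⟩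
    rw [decompose] at hR
    exact ((isDer_sub_smul_one_iff R η).1 (hR ▸ hD)).1
  · rintro η D hD hR
    rw [decompose] at hR
    exact ((isDer_sub_smul_one_iff R η).1 (hR ▸ hD)).2.symm
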